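/- arXiv:1511.08591 — 4 statements merged into one kernel-verified Lean document; each statement's English description precedes it below -/
import Mathlib

section
/- Let a > 0 and let f, g : ℝ → ℝ be continuous probability density functions supported in [0, a] (i.e., f, g ≥ 0, they vanish outside [0, a], and ∫₀^a f = ∫₀^a g = 1). Suppose there is ε ∈ (0, a) such that f(x) < g(x) for all x ∈ (a - ε, a). Then there exists K ∈ ℕ such that for all k ≥ K, ∫₀^a x^k f(x) dx < ∫₀^a x^k g(x) dx. -/
set_option maxHeartbeats 1000000 in
/-- If `f, g` are continuous probability densities supported in `[0, a]`
and `f < g` on a left neighborhood `(a - ε, a)` of `a`, then the moments of `f` are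
eventually strictly smaller than the moments of `g`. -/
theorem tail_dominance_implies_strict_moment_preference
    (a : ℝ) (ha : 0 < a) (f g : ℝ → ℝ)
    (hfc : ContinuousOn f (Set.Icc 0 a)) (hgc : ContinuousOn g (Set.Icc 0 a))
    (hf0 : ∀ x, 0 ≤ f x) (hg0 : ∀ x, 0 ≤ g x)
    (hfsupp : ∀ x ∉ Set.Icc 0 a, f x = 0) (hgsupp : ∀ x ∉ Set.Icc 0 a, g x = 0)
    (hfint : ∫ x in (0:ℝ)..a, f x = 1) (hgint : ∫ x in (0:ℝ)..a, g x = 1)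
    (ε : ℝ) (hε : ε ∈ Set.Ioo 0 a)
    (hlt : ∀ x ∈ Set.Ioo (a - ε) a, f x < g x) :
    ∃ K : ℕ, ∀ k ≥ K,
      ∫ x in (0:ℝ)..a, x ^ k * f x < ∫ x in (0:ℝ)..a, x ^ k * g x := by
  obtain ⟨hε0, hεa⟩ := hε
  set b : ℝ := a - ε with hbdef
  have hb0 : 0 < b := by simp only [hbdef]; linarith
  have hba : b < a := by simp only [hbdef]; linarith
  set c : ℝ := b + (a - b)/3 with hcdef
  set d : ℝ := b + 2*(a - b)/3 with hddef
  have hbc : b < c := by simp only [hcdef]; linarith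
  have hcd : c < d := by simp only [hcdef, hddef]; linarith
  have hda : d < a := by simp only [hddef]; linarith
  set h : ℝ → ℝ := fun x => g x - f x with hhdef
  have hhc : ContinuousOn h (Set.Icc 0 a) := hgc.sub hfc
  have hpos : ∀ x ∈ Set.Ioo b a, 0 < h x := fun x hx => sub_pos.2 (hlt x hx)
  -- bound M on |h|
  obtain ⟨M, hM⟩ : ∃ M, ∀ x ∈ Set.Icc 0 a, |h x| ≤ M := by
    obtain ⟨M, hM⟩ := isCompact_Icc.exists_bound_of_continuousOn hhc
    exact ⟨M, fun x hx => by simpa using hM x hx⟩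
  have hM0 : 0 ≤ M := le_trans (abs_nonneg _) (hM 0 (Set.left_mem_Icc.2 ha.le))
  -- min δ of h on [c,d]
  have hcdsub : Set.Icc c d ⊆ Set.Icc 0 a :=
    Set.Icc_subset_Icc (by linarith) (by linarith)
  obtain ⟨x₀, hx₀, hmin⟩ := isCompact_Icc.exists_isMinOn (Set.nonempty_Icc.2 hcd.le)
    (hhc.mono hcdsub)
  set δ : ℝ := h x₀ with hδdef
  have hδ0 : 0 < δ := hpos x₀ ⟨by linarith [hx₀.1], by linarith [hx₀.2]⟩
  have hδle : ∀ x ∈ Set.Icc c d, δ ≤ h x := fun x hx => hmin hx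
  -- integrability
  have hint : ∀ (k : ℕ) (φ : ℝ → ℝ), ContinuousOn φ (Set.Icc 0 a) →
      ∀ u v : ℝ, u ∈ Set.Icc 0 a → v ∈ Set.Icc 0 a →
      IntervalIntegrable (fun x => x ^ k * φ x) MeasureTheory.volume u v := by
    intro k φ hφ u v hu hv
    apply ContinuousOn.intervalIntegrable
    refine ((continuous_pow k).continuousOn.mul (hφ.mono ?_))
    rw [← Set.uIcc_of_le ha.le]
    exact Set.uIcc_subset_uIcc (by rwa [Set.uIcc_of_le ha.le]) (by rwa [Set.uIcc_of_le ha.le])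
  have mem0 : (0:ℝ) ∈ Set.Icc (0:ℝ) a := Set.left_mem_Icc.2 ha.le
  have mema : a ∈ Set.Icc (0:ℝ) a := Set.right_mem_Icc.2 ha.le
  have memb : b ∈ Set.Icc (0:ℝ) a := ⟨hb0.le, hba.le⟩
  have memc : c ∈ Set.Icc (0:ℝ) a := ⟨by linarith, by linarith⟩
  have memd : d ∈ Set.Icc (0:ℝ) a := ⟨by linarith, by linarith⟩
  have hane : ∀ᵐ x : ℝ, x ≠ a := by
    refine MeasureTheory.ae_iff.mpr ?_
    have : {x : ℝ | ¬ x ≠ a} = {a} := by ext x; simp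
    rw [this]; exact Real.volume_singleton
  have hbne : ∀ᵐ x : ℝ, x ≠ b := by
    refine MeasureTheory.ae_iff.mpr ?_
    have : {x : ℝ | ¬ x ≠ b} = {b} := by ext x; simp
    rw [this]; exact Real.volume_singleton
  -- choose K
  have hratio : 1 < c / b := (one_lt_div hb0).2 hbc
  have htend : Filter.Tendsto (fun k : ℕ => (c / b) ^ k) Filter.atTop Filter.atTop :=
    tendsto_pow_atTop_atTop_of_one_lt hratio
  obtain ⟨K, hK⟩ := Filter.eventually_atTop.1
    (htend.eventually_gt_atTop (M * b / (δ * (d - c))))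
  refine ⟨K, fun k hk => ?_⟩
  have hKk := hK k hk
  -- reduce to positivity of ∫ x^k h
  have hIf := hint k f hfc 0 a mem0 mema
  have hIg := hint k g hgc 0 a mem0 mema
  have hsub : (∫ x in (0:ℝ)..a, x ^ k * g x) - (∫ x in (0:ℝ)..a, x ^ k * f x)
      = ∫ x in (0:ℝ)..a, x ^ k * h x := by
    rw [← intervalIntegral.integral_sub hIg hIf]
    congr 1; ext x; simp [hhdef]; ring
  rw [← sub_pos, hsub]
  -- split the integral
  have hIh0b := hint k h hhc 0 b mem0 memb
  have hIhbc := hint k h hhc b c memb memc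
  have hIhcd := hint k h hhc c d memc memd
  have hIhda := hint k h hhc d a memd mema
  have hsplit : (∫ x in (0:ℝ)..a, x ^ k * h x)
      = (∫ x in (0:ℝ)..b, x ^ k * h x) + (∫ x in b..c, x ^ k * h x)
        + (∫ x in c..d, x ^ k * h x) + (∫ x in d..a, x ^ k * h x) := by
    rw [← intervalIntegral.integral_add_adjacent_intervals hIh0b
        ((hIhbc.trans hIhcd).trans hIhda),
      ← intervalIntegral.integral_add_adjacent_intervals hIhbc (hIhcd.trans hIhda),
      ← intervalIntegral.integral_add_adjacent_intervals hIhcd hIhda]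
    ring
  rw [hsplit]
  -- bound pieces
  have h1 : |∫ x in (0:ℝ)..b, x ^ k * h x| ≤ b ^ k * M * b := by
    have := intervalIntegral.norm_integral_le_of_norm_le_const
      (C := b ^ k * M) (f := fun x => x ^ k * h x) (a := (0:ℝ)) (b := b) ?_
    · simpa [abs_of_nonneg hb0.le] using this
    · intro x hx
      rw [Set.uIoc_of_le hb0.le] at hx
      have hx0 : 0 < x := hx.1
      have hxb : x ≤ b := hx.2
      have hxa : x ∈ Set.Icc (0:ℝ) a := ⟨hx0.le, hxb.trans hba.le⟩
      calc ‖x ^ k * h x‖ = x ^ k * |h x| := by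
            rw [Real.norm_eq_abs, abs_mul, abs_of_nonneg (pow_nonneg hx0.le k)]
        _ ≤ b ^ k * M := mul_le_mul (pow_le_pow_left₀ hx0.le hxb k) (hM x hxa)
            (abs_nonneg _) (pow_nonneg hb0.le k)
  have h2 : 0 ≤ ∫ x in b..c, x ^ k * h x := by
    apply intervalIntegral.integral_nonneg_of_ae_restrict hbc.le
    refine (MeasureTheory.ae_restrict_iff' measurableSet_Icc).mpr ?_
    filter_upwards [hbne] with x hxb hmem
    have hxI : x ∈ Set.Ioo b a := ⟨lt_of_le_of_ne hmem.1 (Ne.symm hxb), by linarith [hmem.2]⟩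
    exact mul_nonneg (pow_nonneg (by linarith [hxI.1]) k) (hpos x hxI).le
  have h4 : 0 ≤ ∫ x in d..a, x ^ k * h x := by
    apply intervalIntegral.integral_nonneg_of_ae_restrict hda.le
    refine (MeasureTheory.ae_restrict_iff' measurableSet_Icc).mpr ?_
    filter_upwards [hane] with x hxa hmem
    have hxI : x ∈ Set.Ioo b a := ⟨by linarith [hmem.1], lt_of_le_of_ne hmem.2 hxa⟩
    exact mul_nonneg (pow_nonneg (by linarith [hxI.1]) k) (hpos x hxI).le
  have h3 : (d - c) * (c ^ k * δ) ≤ ∫ x in c..d, x ^ k * h x := by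
    have hconst : (∫ x in c..d, c ^ k * δ) = (d - c) * (c ^ k * δ) := by
      rw [intervalIntegral.integral_const, smul_eq_mul]
    rw [← hconst]
    apply intervalIntegral.integral_mono_on hcd.le intervalIntegrable_const hIhcd
    intro x hx
    have hx0 : 0 < c := by linarith
    have hck : c ^ k ≤ x ^ k := pow_le_pow_left₀ hx0.le hx.1 k
    have hδx : δ ≤ h x := hδle x hx
    have hxk0 : (0:ℝ) ≤ x ^ k := pow_nonneg (by linarith [hx.1]) k
    calc c ^ k * δ ≤ x ^ k * δ := by nlinarith
      _ ≤ x ^ k * h x := by nlinarith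
  -- final arithmetic
  have hbk : (0:ℝ) < b ^ k := pow_pos hb0 k
  have hdc : (0:ℝ) < δ * (d - c) := mul_pos hδ0 (by linarith)
  have hmb : M * b < (c / b) ^ k * (δ * (d - c)) := (div_lt_iff₀ hdc).1 hKk
  have hckey : M * b * b ^ k < c ^ k * (δ * (d - c)) := by
    have := mul_lt_mul_of_pos_right hmb hbk
    calc M * b * b ^ k < (c / b) ^ k * (δ * (d - c)) * b ^ k := this
      _ = c ^ k * (δ * (d - c)) := by
          rw [div_pow]; field_simp
  have h1' : -(b ^ k * M * b) ≤ ∫ x in (0:ℝ)..b, x ^ k * h x :=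
    neg_le_of_abs_le h1
  have hbridge : (d - c) * (c ^ k * δ) = c ^ k * (δ * (d - c)) := by ring
  linarith [h1', h2, h3, h4, hckey]
end

section
/- Let a > 0 and let f, g : ℝ → ℝ be continuous probability density functions supported in [0, a] with f(a) < g(a). Then there exists K ∈ ℕ such that for all k ≥ K, ∫₀^a x^k f(x) dx < ∫₀^a x^k g(x) dx. -/
/-!
Put `h = g - f`, so `h a > 0`. By continuity `h ≥ h a / 2 =: c` on some `[b, a]` with
`0 ≤ b < a`, and `h ≥ m` on `[0, a]`. Splitting the `k`-th moment of `h` at `b` gives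
`(k + 1) ∫₀^a xᵏ h ≥ a^(k+1) (c + (m - c) (b / a)^(k+1))`, and the bracket tends to `c > 0`.
-/

open Set Filter Topology MeasureTheory

theorem ContinuousOn.exists_forall_mem_Icc_lt_of_lt_right {h : ℝ → ℝ} {l a c : ℝ}
    (hla : l < a) (hh : ContinuousOn h (Icc l a)) (hc : c < h a) :
    ∃ b ∈ Ico l a, ∀ x ∈ Icc b a, c < h x := by
  have hcont : ContinuousWithinAt h (Iic a) a :=
    (hh a (right_mem_Icc.mpr hla.le)).mono_of_mem_nhdsWithin (Icc_mem_nhdsLE hla)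
  obtain ⟨b', hb'a, hb'⟩ :=
    mem_nhdsLE_iff_exists_Icc_subset.mp (hcont.eventually (lt_mem_nhds hc))
  refine ⟨max l b', ⟨le_max_left _ _, max_lt hla hb'a⟩, fun x hx => hb' ?_⟩
  exact ⟨(le_max_right _ _).trans hx.1, hx.2⟩

theorem le_integral_pow_mul_of_le {h : ℝ → ℝ} {a b m : ℝ} (k : ℕ)
    (hb : 0 ≤ b) (hba : b ≤ a)
    (hint : IntervalIntegrable h volume b a) (hm : ∀ x ∈ Icc b a, m ≤ h x) :
    m * ((a ^ (k + 1) - b ^ (k + 1)) / (k + 1)) ≤ ∫ x in b..a, x ^ k * h x := by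
  rw [← integral_pow, ← intervalIntegral.integral_const_mul]
  refine intervalIntegral.integral_mono_on hba ((continuous_pow k).intervalIntegrable b a
    |>.const_mul m) (hint.continuousOn_mul (continuous_pow k).continuousOn) fun x hx => ?_
  rw [mul_comm]
  exact mul_le_mul_of_nonneg_left (hm x hx) (pow_nonneg (hb.trans hx.1) k)

theorem eventually_integral_pow_mul_pos {h : ℝ → ℝ} {a : ℝ} (ha : 0 < a)
    (hh : ContinuousOn h (Icc 0 a)) (hpos : 0 < h a) :
    ∀ᶠ k : ℕ in atTop, 0 < ∫ x in 0..a, x ^ k * h x := by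
  set c := h a / 2
  obtain ⟨b, ⟨hb0, hba⟩, hbc⟩ :=
    hh.exists_forall_mem_Icc_lt_of_lt_right ha (half_lt_self hpos)
  obtain ⟨m, hm⟩ := isCompact_Icc.bddBelow_image hh
  have hm' : ∀ x ∈ Icc 0 b, m ≤ h x := fun x hx =>
    hm ⟨x, ⟨hx.1, hx.2.trans hba.le⟩, rfl⟩
  have hint : ∀ u v, u ∈ Icc 0 a → v ∈ Icc 0 a → IntervalIntegrable h volume u v :=
    fun u v hu hv => (hh.mono (uIcc_subset_Icc hu hv)).intervalIntegrable
  have hb : b ∈ Icc 0 a := ⟨hb0, hba.le⟩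
  have h0 : (0 : ℝ) ∈ Icc 0 a := left_mem_Icc.mpr ha.le
  have ha' : a ∈ Icc 0 a := right_mem_Icc.mpr ha.le
  have hbracket : Tendsto (fun k : ℕ => c + (m - c) * (b / a) ^ (k + 1)) atTop (𝓝 c) := by
    have := ((tendsto_pow_atTop_nhds_zero_of_lt_one (div_nonneg hb0 ha.le)
      ((div_lt_one ha).mpr hba)).comp (tendsto_add_atTop_nat 1)).const_mul (m - c)
    simpa using this.const_add c
  filter_upwards [hbracket.eventually_const_lt (half_pos hpos)] with k hk
  have hsplit := intervalIntegral.integral_add_adjacent_intervals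
    ((hint 0 b h0 hb).continuousOn_mul (continuous_pow k).continuousOn)
    ((hint b a hb ha').continuousOn_mul (continuous_pow k).continuousOn)
  have hlow := add_le_add (le_integral_pow_mul_of_le k le_rfl hb0 (hint 0 b h0 hb) hm')
    (le_integral_pow_mul_of_le k hb0 hba.le (hint b a hb ha') fun x hx => (hbc x hx).le)
  have hident : m * ((b ^ (k + 1) - 0 ^ (k + 1)) / (k + 1))
      + c * ((a ^ (k + 1) - b ^ (k + 1)) / (k + 1))
      = a ^ (k + 1) * (c + (m - c) * (b / a) ^ (k + 1)) / (k + 1) := by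
    rw [div_pow]
    field_simp
    ring
  rw [hident] at hlow
  rw [← hsplit]
  exact (div_pos (mul_pos (pow_pos ha _) hk) k.cast_add_one_pos).trans_le hlow

theorem endpoint_value_comparison_implies_strict_moment_preference_general
    (a : ℝ) (ha : 0 < a) (f g : ℝ → ℝ)
    (hfc : ContinuousOn f (Set.Icc 0 a)) (hgc : ContinuousOn g (Set.Icc 0 a))
    (hlt : f a < g a) :
    ∃ K : ℕ, ∀ k ≥ K,
      ∫ x in (0:ℝ)..a, x ^ k * f x < ∫ x in (0:ℝ)..a, x ^ k * g x := by
  obtain ⟨K, hK⟩ := eventually_atTop.mp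
    (eventually_integral_pow_mul_pos ha (hgc.sub hfc) (sub_pos.mpr hlt))
  refine ⟨K, fun k hk => sub_pos.mp ?_⟩
  have hmoment : ∀ {φ : ℝ → ℝ}, ContinuousOn φ (Icc 0 a) →
      IntervalIntegrable (fun x => x ^ k * φ x) volume 0 a := fun hφ =>
    ((continuous_pow k).continuousOn.mul hφ).intervalIntegrable_of_Icc ha.le
  rw [← intervalIntegral.integral_sub (hmoment hgc) (hmoment hfc)]
  simpa only [Pi.sub_apply, mul_sub] using hK k hk

/-- If `f, g` are continuous probability densities supported in `[0, a]`
with `f a < g a`, then the moments of `f` are eventually strictly smaller than the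
moments of `g`. -/
theorem endpoint_value_comparison_implies_strict_moment_preference
    (a : ℝ) (ha : 0 < a) (f g : ℝ → ℝ)
    (hfc : ContinuousOn f (Set.Icc 0 a)) (hgc : ContinuousOn g (Set.Icc 0 a))
    (hf0 : ∀ x, 0 ≤ f x) (hg0 : ∀ x, 0 ≤ g x)
    (hfsupp : ∀ x ∉ Set.Icc 0 a, f x = 0) (hgsupp : ∀ x ∉ Set.Icc 0 a, g x = 0)
    (hfint : ∫ x in (0:ℝ)..a, f x = 1) (hgint : ∫ x in (0:ℝ)..a, g x = 1)
    (hlt : f a < g a) :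
    ∃ K : ℕ, ∀ k ≥ K,
      ∫ x in (0:ℝ)..a, x ^ k * f x < ∫ x in (0:ℝ)..a, x ^ k * g x :=
  endpoint_value_comparison_implies_strict_moment_preference_general a ha f g hfc hgc hlt
end

section
/- Let 0 < a < b, let f : ℝ → ℝ be a continuous probability density supported in [0, b], and let ε > 0 satisfy ε < (b - a)/3 and suppose f is strictly positive on the interval [b - 2ε, b - ε]. Then there exists K ∈ ℕ such that for all k ≥ K, a^k < ∫₀^b y^k f(y) dy. -/
/-! The moment of order `k` is at least its contribution from `[b - 2ε, b - ε]`, which is at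
least `(b - 2ε)^k · M` with `M = ∫_{b-2ε}^{b-ε} f > 0`. Since `0 < a < b - 2ε`, the ratio
`(a / (b - 2ε))^k` tends to `0`, so eventually `a^k < M (b - 2ε)^k`. -/

open Filter MeasureTheory intervalIntegral

lemma pow_mul_integral_le_integral_pow_mul {f : ℝ → ℝ} {c d : ℝ} (k : ℕ) (hc : 0 ≤ c)
    (hcd : c ≤ d) (hf0 : ∀ y ∈ Set.Icc c d, 0 ≤ f y) (hfi : IntervalIntegrable f volume c d) :
    c ^ k * ∫ y in c..d, f y ≤ ∫ y in c..d, y ^ k * f y := by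
  rw [← intervalIntegral.integral_const_mul]
  refine integral_mono_on hcd (hfi.const_mul _) (hfi.continuousOn_mul (continuousOn_pow k))
    fun y hy => ?_
  exact mul_le_mul_of_nonneg_right (pow_le_pow_left₀ hc hy.1 k) (hf0 y hy)

lemma eventually_pow_lt_mul_pow {a c M : ℝ} (ha : 0 ≤ a) (hac : a < c) (hM : 0 < M) :
    ∀ᶠ k : ℕ in atTop, a ^ k < M * c ^ k := by
  have hc : 0 < c := ha.trans_lt hac
  have hratio : Tendsto (fun k : ℕ => (a / c) ^ k) atTop (nhds 0) :=
    tendsto_pow_atTop_nhds_zero_of_lt_one (div_nonneg ha hc.le) ((div_lt_one hc).mpr hac)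
  filter_upwards [hratio.eventually (gt_mem_nhds hM)] with k hk
  calc a ^ k = (a / c) ^ k * c ^ k := by rw [div_pow, div_mul_cancel₀ _ (pow_pos hc k).ne']
    _ < M * c ^ k := mul_lt_mul_of_pos_right hk (pow_pos hc k)

lemma eventually_pow_lt_integral_pow_mul {f : ℝ → ℝ} {a b c d : ℝ} (ha : 0 ≤ a) (hac : a < c)
    (hcd : c < d) (hdb : d ≤ b) (hfi : IntervalIntegrable f volume 0 b)
    (hf0 : ∀ y ∈ Set.Icc 0 b, 0 ≤ f y) (hpos : ∀ y ∈ Set.Ioo c d, 0 < f y) :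
    ∀ᶠ k : ℕ in atTop, a ^ k < ∫ y in (0:ℝ)..b, y ^ k * f y := by
  have hc : 0 ≤ c := ha.trans hac.le
  have hcd_sub : Set.Icc c d ⊆ Set.Icc 0 b := Set.Icc_subset_Icc hc hdb
  have hfi_cd : IntervalIntegrable f volume c d := hfi.mono_set <| by
    rw [Set.uIcc_of_le hcd.le, Set.uIcc_of_le (hc.trans (hcd.le.trans hdb))]
    exact hcd_sub
  have hM : 0 < ∫ y in c..d, f y := intervalIntegral_pos_of_pos_on hfi_cd hpos hcd
  filter_upwards [eventually_pow_lt_mul_pow ha hac hM] with k hk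
  calc a ^ k < (∫ y in c..d, f y) * c ^ k := hk
    _ ≤ ∫ y in c..d, y ^ k * f y := by
      rw [mul_comm]
      exact pow_mul_integral_le_integral_pow_mul k hc hcd.le (fun y hy => hf0 y (hcd_sub hy))
        hfi_cd
    _ ≤ ∫ y in (0:ℝ)..b, y ^ k * f y := by
      refine integral_mono_interval hc hcd.le hdb ?_ (hfi.continuousOn_mul (continuousOn_pow k))
      refine ae_restrict_of_forall_mem measurableSet_Ioc fun y hy => ?_
      exact mul_nonneg (pow_nonneg hy.1.le k) (hf0 y (Set.Ioc_subset_Icc_self hy))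

theorem deterministic_preferred_to_random_of_lt_general
    (a b : ℝ) (ha : 0 < a)
    (f : ℝ → ℝ) (hfc : Continuous f) (hf0 : ∀ x, 0 ≤ f x)
    (ε : ℝ) (hε : 0 < ε) (hε3 : ε < (b - a) / 3)
    (hpos : ∀ y ∈ Set.Icc (b - 2 * ε) (b - ε), 0 < f y) :
    ∃ K : ℕ, ∀ k ≥ K, a ^ k < ∫ y in (0:ℝ)..b, y ^ k * f y :=
  eventually_atTop.mp <|
    eventually_pow_lt_integral_pow_mul (c := b - 2 * ε) (d := b - ε) ha.le (by linarith)
      (by linarith) (by linarith) (hfc.intervalIntegrable 0 b) (fun y _ => hf0 y)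
      fun y hy => hpos y (Set.Ioo_subset_Icc_self hy)

/-- Deterministic vs. random, case `a < b`. If `f` is a continuous
probability density supported in `[0, b]` which is strictly positive on
`[b - 2ε, b - ε]` where `0 < ε < (b - a)/3`, then the powers `a^k` are eventually
strictly smaller than the `k`-th moments of `f`. -/
theorem deterministic_preferred_to_random_of_lt
    (a b : ℝ) (ha : 0 < a) (hab : a < b)
    (f : ℝ → ℝ) (hfc : Continuous f) (hf0 : ∀ x, 0 ≤ f x)
    (hsupp : ∀ x ∉ Set.Icc 0 b, f x = 0)
    (hfint : ∫ y in (0:ℝ)..b, f y = 1)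
    (ε : ℝ) (hε : 0 < ε) (hε3 : ε < (b - a) / 3)
    (hpos : ∀ y ∈ Set.Icc (b - 2 * ε) (b - ε), 0 < f y) :
    ∃ K : ℕ, ∀ k ≥ K, a ^ k < ∫ y in (0:ℝ)..b, y ^ k * f y :=
  deterministic_preferred_to_random_of_lt_general a b ha f hfc hf0 ε hε hε3 hpos
end

section
/- Define the Epanechnikov kernel κ(x) = (3/4)(1 - x²) for |x| ≤ 1 and κ(x) = 0 otherwise. Let x₁ ≤ ⋯ ≤ x_{n₁} and y₁ ≤ ⋯ ≤ y_{n₂} be finite samples of positive reals and h₁, h₂ > 0 bandwidths with x₁ - h₁ ≥ 0 and y₁ - h₂ ≥ 0, and let f̂₁(t) = (1/(n₁h₁)) ∑_{i=1}^{n₁} κ((x_i - t)/h₁) and f̂₂(t) = (1/(n₂h₂)) ∑_{j=1}^{n₂} κ((y_j - t)/h₂) be the corresponding kernel density estimators. If x_{n₁} + h₁ < y_{n₂} + h₂, then there exists K ∈ ℕ such that for all k ≥ K, ∫₀^∞ t^k f̂₁(t) dt < ∫₀^∞ t^k f̂₂(t) dt. -/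
/-!
Both estimates are continuous with compact support. The `k`-th moment of `f̂₁` is at most
`b₁ ^ k` times its total mass, where `b₁ = x_{n₁} + h₁` is the right end of its support, while
`f̂₂` is positive just to the left of `y_{n₂} + h₂ > b₁`, so for any `c` in between its `k`-th
moment is at least `c ^ k` times the positive mass it puts on `(c, ∞)`. Since `b₁ ^ k = o(c ^ k)`,
the moments of `f̂₂` eventually exceed those of `f̂₁`.
-/

open Filter MeasureTheory Set

/-- The Epanechnikov kernel `κ(x) = (3/4)(1 - x²)` for `|x| ≤ 1`, and `0` otherwise. -/
noncomputable def epanechnikov (x : ℝ) : ℝ :=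
  if |x| ≤ 1 then 3 / 4 * (1 - x ^ 2) else 0

lemma eventually_pow_mul_lt_pow_mul {b c A B : ℝ} (hb : 0 ≤ b) (hbc : b < c) (hB : 0 < B) :
    ∀ᶠ k : ℕ in atTop, b ^ k * A < c ^ k * B := by
  filter_upwards [((isLittleO_pow_pow_of_lt_left hb hbc).const_mul_left A).def (half_pos hB)]
    with k hk
  have hck : 0 < c ^ k := pow_pos (hb.trans_lt hbc) k
  rw [Real.norm_eq_abs, Real.norm_eq_abs, abs_of_pos hck] at hk
  calc b ^ k * A ≤ |A * b ^ k| := mul_comm A (b ^ k) ▸ le_abs_self _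
    _ ≤ B / 2 * c ^ k := hk
    _ < c ^ k * B := by nlinarith

section Moments

variable {f g : ℝ → ℝ}

lemma integrable_pow_mul (hf : Continuous f) (hfc : HasCompactSupport f) (k : ℕ) :
    Integrable (fun t ↦ t ^ k * f t) :=
  (by fun_prop : Continuous fun t ↦ t ^ k * f t).integrable_of_hasCompactSupport
    (hfc.mul_left (f := fun t ↦ t ^ k))

lemma setIntegral_Ioi_zero_pow_mul_le {b : ℝ} (hf : Continuous f) (hfc : HasCompactSupport f)
    (hb : 0 ≤ b) (hfb : ∀ t, b < t → f t = 0) (k : ℕ) :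
    ∫ t in Ioi 0, t ^ k * f t ≤ b ^ k * ∫ t in Ioi 0, |f t| := by
  rw [← integral_const_mul]
  refine setIntegral_mono_on (integrable_pow_mul hf hfc k).integrableOn
    ((hf.abs.integrable_of_hasCompactSupport hfc.abs).integrableOn.const_mul _)
    measurableSet_Ioi fun t (ht : 0 < t) ↦ ?_
  rcases le_or_gt t b with htb | htb
  · calc t ^ k * f t ≤ t ^ k * |f t| := by gcongr; exact le_abs_self _
      _ ≤ b ^ k * |f t| := by gcongr
  · rw [hfb t htb, mul_zero]
    positivity

lemma pow_mul_setIntegral_Ioi_le {c : ℝ} (hg : Continuous g) (hgc : HasCompactSupport g)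
    (hg0 : ∀ t, 0 ≤ g t) (hc : 0 ≤ c) (k : ℕ) :
    c ^ k * ∫ t in Ioi c, g t ≤ ∫ t in Ioi 0, t ^ k * g t := by
  have hint := integrable_pow_mul hg hgc k
  rw [← integral_const_mul]
  calc ∫ t in Ioi c, c ^ k * g t ≤ ∫ t in Ioi c, t ^ k * g t :=
        setIntegral_mono_on
          ((hg.integrable_of_hasCompactSupport hgc).integrableOn.const_mul _) hint.integrableOn
          measurableSet_Ioi fun t (ht : c < t) ↦ by gcongr; exact hg0 t
    _ ≤ ∫ t in Ioi 0, t ^ k * g t :=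
        setIntegral_mono_set hint.integrableOn
          ((ae_restrict_iff' measurableSet_Ioi).2 <| ae_of_all _ fun t (ht : 0 < t) ↦
            mul_nonneg (pow_nonneg ht.le k) (hg0 t))
          (Ioi_subset_Ioi hc).eventuallyLE

lemma setIntegral_Ioi_pos_of_pos {c t₀ : ℝ} (hg : Continuous g) (hgc : HasCompactSupport g)
    (hg0 : ∀ t, 0 ≤ g t) (hct₀ : c < t₀) (hgt₀ : 0 < g t₀) : 0 < ∫ t in Ioi c, g t := by
  rw [setIntegral_pos_iff_support_of_nonneg_ae (ae_of_all _ hg0)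
    (hg.integrable_of_hasCompactSupport hgc).integrableOn]
  exact (hg.isOpen_support.inter isOpen_Ioi).measure_pos volume ⟨t₀, hgt₀.ne', hct₀⟩

theorem eventually_setIntegral_Ioi_zero_pow_mul_lt {b t₀ : ℝ}
    (hf : Continuous f) (hfc : HasCompactSupport f) (hb : 0 ≤ b) (hfb : ∀ t, b < t → f t = 0)
    (hg : Continuous g) (hgc : HasCompactSupport g) (hg0 : ∀ t, 0 ≤ g t)
    (hbt₀ : b < t₀) (hgt₀ : 0 < g t₀) :
    ∀ᶠ k : ℕ in atTop, ∫ t in Ioi 0, t ^ k * f t < ∫ t in Ioi 0, t ^ k * g t := by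
  obtain ⟨c, hbc, hct₀⟩ := exists_between hbt₀
  filter_upwards [eventually_pow_mul_lt_pow_mul hb hbc
    (setIntegral_Ioi_pos_of_pos hg hgc hg0 hct₀ hgt₀)] with k hk
  exact (setIntegral_Ioi_zero_pow_mul_le hf hfc hb hfb k).trans_lt
    (hk.trans_le (pow_mul_setIntegral_Ioi_le hg hgc hg0 (hb.trans hbc.le) k))

end Moments

lemma epanechnikov_eq_max (x : ℝ) : epanechnikov x = 3 / 4 * max (1 - x ^ 2) 0 := by
  rw [epanechnikov]
  split_ifs with h
  · rw [max_eq_left (by nlinarith [sq_abs x, abs_nonneg x])]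
  · rw [max_eq_right (by nlinarith [sq_abs x, abs_nonneg x]), mul_zero]

@[fun_prop]
lemma continuous_epanechnikov : Continuous epanechnikov := by
  simp_rw [funext epanechnikov_eq_max]
  fun_prop

lemma epanechnikov_nonneg (x : ℝ) : 0 ≤ epanechnikov x := by
  rw [epanechnikov_eq_max]
  positivity

lemma epanechnikov_eq_zero_of_one_le_abs {x : ℝ} (hx : 1 ≤ |x|) : epanechnikov x = 0 := by
  rw [epanechnikov_eq_max, max_eq_right (by nlinarith [sq_abs x]), mul_zero]

lemma epanechnikov_pos_of_abs_lt_one {x : ℝ} (hx : |x| < 1) : 0 < epanechnikov x := by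
  rw [epanechnikov_eq_max, max_eq_left (by nlinarith [sq_abs x, abs_nonneg x])]
  nlinarith [sq_abs x, abs_nonneg x]

section KernelDensityEstimate

noncomputable def kde {n : ℕ} (z : Fin n → ℝ) (h t : ℝ) : ℝ :=
  1 / (n * h) * ∑ i, epanechnikov ((z i - t) / h)

variable {n : ℕ} (z : Fin n → ℝ) {h : ℝ}

lemma continuous_kde : Continuous (kde z h) := by
  unfold kde
  fun_prop

lemma kde_nonneg (hh : 0 ≤ h) (t : ℝ) : 0 ≤ kde z h t :=
  mul_nonneg (by positivity) (Finset.sum_nonneg fun i _ ↦ epanechnikov_nonneg _)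

lemma kde_eq_zero_of_forall_le_abs (hh : 0 < h) {t : ℝ} (ht : ∀ i, h ≤ |z i - t|) :
    kde z h t = 0 := by
  rw [kde, Finset.sum_eq_zero, mul_zero]
  intro i _
  apply epanechnikov_eq_zero_of_one_le_abs
  rw [abs_div, abs_of_pos hh, one_le_div hh]
  exact ht i

lemma hasCompactSupport_kde (hh : 0 < h) : HasCompactSupport (kde z h) := by
  refine HasCompactSupport.intro (isCompact_iUnion fun i ↦ isCompact_closedBall (z i) h)
    fun t ht ↦ kde_eq_zero_of_forall_le_abs z hh fun i ↦ ?_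
  have : h < dist t (z i) := not_le.1 fun hi ↦ ht (mem_iUnion.2 ⟨i, hi⟩)
  rw [Real.dist_eq, abs_sub_comm] at this
  exact this.le

lemma kde_pos (hh : 0 < h) {t : ℝ} (i : Fin n) (hi : |z i - t| < h) : 0 < kde z h t := by
  have hn : (0 : ℝ) < n := Nat.cast_pos.2 i.pos
  refine mul_pos (by positivity) (Finset.sum_pos' (fun j _ ↦ epanechnikov_nonneg _)
    ⟨i, Finset.mem_univ i, epanechnikov_pos_of_abs_lt_one ?_⟩)
  rwa [abs_div, abs_of_pos hh, div_lt_one hh]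

end KernelDensityEstimate

theorem kde_comparison_shorter_tail_strictly_preferred_general
    (n₁ n₂ : ℕ) (hn₁ : 0 < n₁) (hn₂ : 0 < n₂)
    (x : Fin n₁ → ℝ) (y : Fin n₂ → ℝ)
    (hxmono : Monotone x)
    (hxpos : ∀ i, 0 < x i)
    (h₁ h₂ : ℝ) (hh₁ : 0 < h₁) (hh₂ : 0 < h₂)
    (hmax : x ⟨n₁ - 1, Nat.sub_lt hn₁ one_pos⟩ + h₁ <
            y ⟨n₂ - 1, Nat.sub_lt hn₂ one_pos⟩ + h₂) :
    ∃ K : ℕ, ∀ k ≥ K,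
      (∫ t in Set.Ioi (0:ℝ),
          t ^ k * (1 / ((n₁ : ℝ) * h₁) * ∑ i, epanechnikov ((x i - t) / h₁))) <
      ∫ t in Set.Ioi (0:ℝ),
          t ^ k * (1 / ((n₂ : ℝ) * h₂) * ∑ j, epanechnikov ((y j - t) / h₂)) := by
  set iM : Fin n₁ := ⟨n₁ - 1, Nat.sub_lt hn₁ one_pos⟩
  set jM : Fin n₂ := ⟨n₂ - 1, Nat.sub_lt hn₂ one_pos⟩
  have hx_le : ∀ i, x i ≤ x iM := fun i ↦ hxmono (Fin.le_def.2 (Nat.le_pred_of_lt i.isLt))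
  have hkde₁ : ∀ t, x iM + h₁ < t → kde x h₁ t = 0 := fun t ht ↦
    kde_eq_zero_of_forall_le_abs x hh₁ fun i ↦ by
      rw [abs_sub_comm, abs_of_pos (by linarith [hx_le i])]
      linarith [hx_le i]
  obtain ⟨t₀, hmt₀, ht₀⟩ := exists_between (max_lt hmax (by linarith : y jM - h₂ < y jM + h₂))
  have hkde₂ : 0 < kde y h₂ t₀ := kde_pos y hh₂ jM <| abs_sub_lt_iff.2
    ⟨by linarith [le_max_right (x iM + h₁) (y jM - h₂)], by linarith⟩
  exact eventually_atTop.1 <| eventually_setIntegral_Ioi_zero_pow_mul_lt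
    (continuous_kde x) (hasCompactSupport_kde x hh₁) (by linarith [hxpos iM]) hkde₁
    (continuous_kde y) (hasCompactSupport_kde y hh₂) (kde_nonneg y hh₂.le)
    ((le_max_left _ _).trans_lt hmt₀) hkde₂

/-- First case of the comparison procedure for Epanechnikov kernel density
estimates: if the support of the estimator `f̂₁` (built from the ordered positive samples
`x₁ ≤ ⋯ ≤ x_{n₁}` with bandwidth `h₁`) ends strictly before that of `f̂₂`
(i.e. `x_{n₁} + h₁ < y_{n₂} + h₂`), then the moments of `f̂₁` are eventually strictly
smaller than those of `f̂₂`, i.e. `f̂₁ ≺ f̂₂`. -/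
theorem kde_comparison_shorter_tail_strictly_preferred
    (n₁ n₂ : ℕ) (hn₁ : 0 < n₁) (hn₂ : 0 < n₂)
    (x : Fin n₁ → ℝ) (y : Fin n₂ → ℝ)
    (hxmono : Monotone x) (hymono : Monotone y)
    (hxpos : ∀ i, 0 < x i) (hypos : ∀ j, 0 < y j)
    (h₁ h₂ : ℝ) (hh₁ : 0 < h₁) (hh₂ : 0 < h₂)
    (hx1 : 0 ≤ x ⟨0, hn₁⟩ - h₁) (hy1 : 0 ≤ y ⟨0, hn₂⟩ - h₂)
    (hmax : x ⟨n₁ - 1, Nat.sub_lt hn₁ one_pos⟩ + h₁ <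
            y ⟨n₂ - 1, Nat.sub_lt hn₂ one_pos⟩ + h₂) :
    ∃ K : ℕ, ∀ k ≥ K,
      (∫ t in Set.Ioi (0:ℝ),
          t ^ k * (1 / ((n₁ : ℝ) * h₁) * ∑ i, epanechnikov ((x i - t) / h₁))) <
      ∫ t in Set.Ioi (0:ℝ),
          t ^ k * (1 / ((n₂ : ℝ) * h₂) * ∑ j, epanechnikov ((y j - t) / h₂)) :=
  kde_comparison_shorter_tail_strictly_preferred_general n₁ n₂ hn₁ hn₂ x y hxmono hxpos h₁ h₂ hh₁
    hh₂ hmax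
end
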